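/- Let H be a graded connected Hopf algebra with grading operator Y (Y(x) = n·x for x homogeneous of degree n), and let γ be a character of H with values in a commutative algebra A. Then the Dynkin-type element R̃(γ) = γ^{⋆−1} ⋆ (γ ∘ Y) is an infinitesimal character: R̃(γ)(xy) = R̃(γ)(x)·ε(y) + ε(x)·R̃(γ)(y) for all x, y ∈ H. -/

import Mathlib

open TensorProduct

variable {k H A : Type*} [CommRing k] [CommRing H] [HopfAlgebra k H]
  [CommRing A] [Algebra k A]

/-- The convolution product `α ⋆ β = m_A ∘ (α ⊗ β) ∘ Δ` on linear maps `H → A`. -/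
noncomputable def conv (α β : H →ₗ[k] A) : H →ₗ[k] A :=
  LinearMap.mul' k A ∘ₗ TensorProduct.map α β ∘ₗ Coalgebra.comul

/-!
The grading operator is a derivation, so `γ ∘ Y` is a derivation along `γ`. As `H` is
commutative, `γ ∘ S` is again a character, and convolving on the left by a character `χ` turns a
derivation along `ψ` into a derivation along `χ ⋆ ψ`; here `(γ ∘ S) ⋆ γ = γ ∘ (S ⋆ id) = ε`.
-/

open Coalgebra HopfAlgebra WithConv

theorem conv_eq_ofConv_convMul (α β : H →ₗ[k] A) : conv α β = (toConv α * toConv β).ofConv :=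
  rfl

theorem map_mul_of_eq_degree_smul {R B : Type*} [CommSemiring R] [Semiring B] [Algebra R B]
    (𝒜 : ℕ → Submodule R B) [GradedAlgebra 𝒜] {Y : B →ₗ[R] B}
    (hY : ∀ n : ℕ, ∀ x ∈ 𝒜 n, Y x = (n : R) • x) (u v : B) :
    Y (u * v) = Y u * v + u * Y v := by
  induction u using DirectSum.Decomposition.inductionOn 𝒜 with
  | zero => simp
  | add u u' hu hu' => simp only [add_mul, map_add, hu, hu']; abel
  | @homogeneous p x =>
    induction v using DirectSum.Decomposition.inductionOn 𝒜 with
    | zero => simp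
    | add v v' hv hv' => simp only [mul_add, map_add, hv, hv']; abel
    | @homogeneous q y =>
      rw [hY _ _ (SetLike.mul_mem_graded x.2 y.2), hY _ _ x.2, hY _ _ y.2, Nat.cast_add,
        add_smul, smul_mul_assoc, mul_smul_comm]

theorem convMul_apply_mul_of_leibniz {R C B : Type*} [CommSemiring R] [Semiring C]
    [Bialgebra R C] [CommSemiring B] [Algebra R B] (χ ψ : C →ₐ[R] B) (D : C →ₗ[R] B)
    (hD : ∀ u v, D (u * v) = D u * ψ v + ψ u * D v) (x y : C) :
    (toConv χ.toLinearMap * toConv D) (x * y) =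
      (toConv χ.toLinearMap * toConv D) x * (toConv χ.toLinearMap * toConv ψ.toLinearMap) y +
        (toConv χ.toLinearMap * toConv ψ.toLinearMap) x * (toConv χ.toLinearMap * toConv D) y := by
  rw [((ℛ R x).mul (ℛ R y)).convMul_apply, (ℛ R x).convMul_apply, (ℛ R x).convMul_apply,
    (ℛ R y).convMul_apply, (ℛ R y).convMul_apply, Finset.sum_mul_sum, Finset.sum_mul_sum,
    ← Finset.sum_add_distrib, Repr.mul_index, Finset.sum_product]
  refine Finset.sum_congr rfl fun i _ => ?_
  rw [← Finset.sum_add_distrib]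
  refine Finset.sum_congr rfl fun j _ => ?_
  simp only [Repr.mul_left, Repr.mul_right, AlgHom.toLinearMap_apply, map_mul, hD]
  ring

theorem algHom_comp_antipode_mul_algHom {R C B : Type*} [CommSemiring R] [Semiring C]
    [HopfAlgebra R C] [Semiring B] [Algebra R B] (γ : C →ₐ[R] B) :
    toConv (γ.toLinearMap ∘ₗ antipode R) * toConv γ.toLinearMap = 1 := by
  have h := LinearMap.algHom_comp_convMul_distrib γ (toConv (antipode R)) (toConv LinearMap.id)
  rw [LinearMap.antipode_mul_id] at h
  ext c
  simpa using (LinearMap.congr_fun h c).symm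

theorem dynkin_element_is_infinitesimal_character_general
    (𝒜 : ℕ → Submodule k H) [GradedAlgebra 𝒜]
    (Y : H →ₗ[k] H) (hY : ∀ n : ℕ, ∀ x ∈ 𝒜 n, Y x = (n : k) • x)
    (γ : H →ₐ[k] A) :
    ∀ x y : H,
      conv (γ.toLinearMap ∘ₗ HopfAlgebra.antipode (R := k)) (γ.toLinearMap ∘ₗ Y)
          (x * y)
        = Coalgebra.counit (R := k) y •
            conv (γ.toLinearMap ∘ₗ HopfAlgebra.antipode (R := k))
              (γ.toLinearMap ∘ₗ Y) x
          + Coalgebra.counit (R := k) x •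
            conv (γ.toLinearMap ∘ₗ HopfAlgebra.antipode (R := k))
              (γ.toLinearMap ∘ₗ Y) y := by
  intro x y
  simp only [conv_eq_ofConv_convMul]
  have hγY : ∀ u v, (γ.toLinearMap ∘ₗ Y) (u * v) =
      (γ.toLinearMap ∘ₗ Y) u * γ v + γ u * (γ.toLinearMap ∘ₗ Y) v := by
    intro u v
    simp [map_mul_of_eq_degree_smul 𝒜 hY u v]
  have h := convMul_apply_mul_of_leibniz (γ.comp (antipodeAlgHom k H)) γ _ hγY x y
  rw [AlgHom.comp_toLinearMap, toLinearMap_antipodeAlgHom,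
    algHom_comp_antipode_mul_algHom] at h
  simpa only [LinearMap.convOne_apply, Algebra.smul_def, mul_comm] using h

/-- Let `H` be a graded connected Hopf algebra with grading operator
`Y` (`Y x = n • x` for `x` of degree `n`) whose coproduct respects the grading, and
let `γ : H → A` be a character with values in a commutative algebra `A`.  Then the
Dynkin-type element `R̃(γ) = γ^{⋆−1} ⋆ (γ ∘ Y) = (γ ∘ S) ⋆ (γ ∘ Y)` is an
infinitesimal character:
`R̃(γ)(x y) = ε(y) • R̃(γ)(x) + ε(x) • R̃(γ)(y)` for all `x y ∈ H`. -/
theorem dynkin_element_is_infinitesimal_character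
    (𝒜 : ℕ → Submodule k H) [GradedAlgebra 𝒜]
    (hconn : 𝒜 0 = Submodule.span k {(1 : H)})
    (hcomul : ∀ n : ℕ, ∀ x ∈ 𝒜 n, Coalgebra.comul (R := k) x ∈
      ⨆ p ∈ Finset.range (n + 1),
        LinearMap.range (TensorProduct.map (𝒜 p).subtype (𝒜 (n - p)).subtype))
    (Y : H →ₗ[k] H) (hY : ∀ n : ℕ, ∀ x ∈ 𝒜 n, Y x = (n : k) • x)
    (γ : H →ₐ[k] A) :
    ∀ x y : H,
      conv (γ.toLinearMap ∘ₗ HopfAlgebra.antipode (R := k)) (γ.toLinearMap ∘ₗ Y)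
          (x * y)
        = Coalgebra.counit (R := k) y •
            conv (γ.toLinearMap ∘ₗ HopfAlgebra.antipode (R := k))
              (γ.toLinearMap ∘ₗ Y) x
          + Coalgebra.counit (R := k) x •
            conv (γ.toLinearMap ∘ₗ HopfAlgebra.antipode (R := k))
              (γ.toLinearMap ∘ₗ Y) y :=
  dynkin_element_is_infinitesimal_character_general 𝒜 Y hY γ
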